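/- arXiv:1209.4888 — 3 statements merged into one kernel-verified Lean document; each statement's English description precedes it below -/
import Mathlib

section
/- In the Taft algebra A_N, the right modular function α determined by the right integral t = Σ_{j=0}^{N-1} x^{N-1}g^j satisfies α(g) = ω and α(x) = 0; i.e., g·t = ω·t and x·t = 0. -/
/-! Write `t = x^{N-1} s` with `s = ∑_{j<N} g^j`. Since `x^{N-1} g = ω^{N-1} g x^{N-1}` and
`ω^N = 1`, we get `g x^{N-1} = ω x^{N-1} g`; and `g s = s` because `(g - 1) s = g^N - 1 = 0`.
Hence `g t = ω t`, while `x t = x^N s = 0`. -/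

open Finset

theorem pow_mul_eq_smul_mul_pow {R A : Type*} [CommSemiring R] [Semiring A] [Algebra R A]
    {ω : R} {g x : A} (hxg : x * g = ω • (g * x)) (m : ℕ) :
    x ^ m * g = ω ^ m • (g * x ^ m) := by
  induction m with
  | zero => simp
  | succ m ih =>
    rw [pow_succ', mul_assoc, ih, mul_smul_comm, ← mul_assoc, hxg, smul_mul_assoc, smul_smul,
      mul_assoc, ← pow_succ', ← pow_succ]

theorem mul_pow_pred_eq_smul_pow_pred_mul {R A : Type*} [CommSemiring R] [Semiring A]
    [Algebra R A] {n : ℕ} (hn : n ≠ 0) {ω : R} (hω : ω ^ n = 1) {g x : A}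
    (hxg : x * g = ω • (g * x)) :
    g * x ^ (n - 1) = ω • (x ^ (n - 1) * g) := by
  rw [pow_mul_eq_smul_mul_pow hxg, smul_smul, ← pow_succ', Nat.sub_one_add_one hn, hω, one_smul]

theorem mul_geom_sum_of_pow_eq_one {A : Type*} [Ring A] {n : ℕ} {g : A} (hg : g ^ n = 1) :
    g * ∑ i ∈ range n, g ^ i = ∑ i ∈ range n, g ^ i := by
  rw [← sub_eq_zero, ← sub_one_mul, mul_geom_sum, hg, sub_self]

theorem taft_modular_function_general
    (k : Type*) [Field k] (N : ℕ) (hN : 2 ≤ N)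
    (ω : k) (hω : IsPrimitiveRoot ω N)
    (A : Type*) [Ring A] [Algebra k A]
    (g x : A) (hg : g ^ N = 1) (hx : x ^ N = 0) (hxg : x * g = ω • (g * x)) :
    g * (∑ j ∈ Finset.range N, x ^ (N - 1) * g ^ j) =
      ω • (∑ j ∈ Finset.range N, x ^ (N - 1) * g ^ j) ∧
    x * (∑ j ∈ Finset.range N, x ^ (N - 1) * g ^ j) = 0 := by
  have hN0 : N ≠ 0 := by omega
  rw [← mul_sum]
  constructor
  · rw [← mul_assoc, mul_pow_pred_eq_smul_pow_pred_mul hN0 hω.pow_eq_one hxg, smul_mul_assoc,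
      mul_assoc, mul_geom_sum_of_pow_eq_one hg]
  · rw [← mul_assoc, ← pow_succ', Nat.sub_one_add_one hN0, hx, zero_mul]

/-- In the Taft algebra `A_N`, the right modular function `α` determined by the
right integral `t = Σ_{j=0}^{N-1} x^{N-1} g^j` satisfies `α g = ω`, `α x = 0`:
that is, `g·t = ω·t` and `x·t = 0`. -/
theorem taft_modular_function
    (k : Type*) [Field k] (N : ℕ) (hN : 2 ≤ N)
    (ω : k) (hω : IsPrimitiveRoot ω N)
    (A : Type*) [Ring A] [Algebra k A]
    (g x : A) (hg : g ^ N = 1) (hx : x ^ N = 0) (hxg : x * g = ω • (g * x))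
    (b : Module.Basis (Fin N × Fin N) k A)
    (hb : ∀ i j : Fin N, b (i, j) = x ^ (i : ℕ) * g ^ (j : ℕ)) :
    g * (∑ j ∈ Finset.range N, x ^ (N - 1) * g ^ j) =
      ω • (∑ j ∈ Finset.range N, x ^ (N - 1) * g ^ j) ∧
    x * (∑ j ∈ Finset.range N, x ^ (N - 1) * g ^ j) = 0 :=
  taft_modular_function_general k N hN ω hω A g x hg hx hxg
end

section
/- Let A_N be the Taft algebra over k containing a primitive N-th root of unity ω, realized as B#kG with B = k[x]/(x^N) and G = ⟨g⟩ cyclic of order N acting by g·x = ωx. The G-invariants of A_N under the conjugation-type action (twisted by χ^{iN+1} = ω in odd degrees) are: A^G = kG in even degrees, and A^G = Span_k{x, xg, …, xg^{N-1}} in odd degrees. -/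
/-!
Since `g ^ N = 1`, `g` is a unit, and both invariance conditions say that `a` is an eigenvector
of conjugation `a ↦ g⁻¹ a g`: with eigenvalue `1` in even degrees and `ω` in odd degrees.
From `x g = ω g x` we get `g⁻¹ (x ^ i g ^ j) g = ω ^ i x ^ i g ^ j`, so conjugation is diagonal
in the PBW basis `x ^ i g ^ j`, and the eigenspace for `ω ^ i₀` is spanned by the basis vectors
with `ω ^ i = ω ^ i₀`, that is (as `ω` is a primitive `N`-th root of unity) with `i = i₀`.
-/

theorem Module.Basis.apply_eq_smul_iff_mem_span {ι R M : Type*} [CommRing R] [NoZeroDivisors R]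
    [AddCommGroup M] [Module R M] (b : Module.Basis ι R M) {f : M →ₗ[R] M} {μ : ι → R}
    (hf : ∀ i, f (b i) = μ i • b i) (c : R) (a : M) :
    f a = c • a ↔ a ∈ Submodule.span R (b '' {i | μ i = c}) := by
  have repr_f : ∀ i, b.coord i ∘ₗ f = μ i • b.coord i := fun i ↦ b.ext fun j ↦ by
    by_cases hij : j = i
    · subst hij; simp [hf]
    · simp [hf, hij]
  rw [b.mem_span_image, b.ext_elem_iff]
  refine forall_congr' fun i ↦ ?_
  have hfa : b.repr (f a) i = μ i * b.repr a i := LinearMap.congr_fun (repr_f i) a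
  rw [hfa, map_smul, Finsupp.smul_apply, smul_eq_mul, mul_eq_mul_right_iff, Finset.mem_coe,
    Finsupp.mem_support_iff, Set.mem_ofPred_eq, or_iff_not_imp_right]

section Taft

variable {k A : Type*} [Field k] [Ring A] [Algebra k A]

theorem pow_mul_eq_pow_smul_mul_pow {ω : k} {g x : A} (hxg : x * g = ω • (g * x)) (i : ℕ) :
    x ^ i * g = ω ^ i • (g * x ^ i) := by
  induction i with
  | zero => simp
  | succ n ih =>
    rw [pow_succ, mul_assoc, hxg, mul_smul_comm, ← mul_assoc, ih, smul_mul_assoc, smul_smul,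
      mul_assoc, ← pow_succ', ← pow_succ]

theorem Units.inv_mul_mul_eq_smul_iff (u : Aˣ) (c : k) (a : A) :
    ↑u⁻¹ * (a * u) = c • a ↔ c • (↑u * a) = a * u := by
  rw [Units.inv_mul_eq_iff_eq_mul, mul_smul_comm, eq_comm]

theorem Units.inv_mul_pow_mul_pow_mul {ω : k} {x : A} (u : Aˣ) (hxu : x * u = ω • (↑u * x))
    (i j : ℕ) : ↑u⁻¹ * (x ^ i * ↑u ^ j * u) = ω ^ i • (x ^ i * ↑u ^ j) := by
  rw [mul_assoc, pow_mul_comm', ← mul_assoc (x ^ i), pow_mul_eq_pow_smul_mul_pow hxu,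
    smul_mul_assoc, mul_smul_comm, mul_assoc, Units.inv_mul_cancel_left]

theorem IsPrimitiveRoot.setOf_pow_fst_eq_pow {ι : Type*} {ω : k} {N : ℕ}
    (hω : IsPrimitiveRoot ω N) (i : Fin N) :
    {p : Fin N × ι | ω ^ (p.1 : ℕ) = ω ^ (i : ℕ)} = Set.range (Prod.mk i) := by
  ext ⟨i', j⟩
  simp only [Set.mem_ofPred_eq, Set.mem_range, Prod.mk.injEq, exists_eq_right]
  exact ⟨fun h ↦ (Fin.ext (hω.pow_inj i'.isLt i.isLt h)).symm, fun h ↦ h ▸ rfl⟩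

theorem taft_twisted_invariants {N : ℕ} {ω : k} (hω : IsPrimitiveRoot ω N)
    {g x : A} (hg : g ^ N = 1) (hxg : x * g = ω • (g * x))
    (b : Module.Basis (Fin N × Fin N) k A)
    (hb : ∀ i j : Fin N, b (i, j) = x ^ (i : ℕ) * g ^ (j : ℕ)) (i : Fin N) :
    {a : A | ω ^ (i : ℕ) • (g * a) = a * g} =
      ↑(Submodule.span k (Set.range fun j : Fin N => x ^ (i : ℕ) * g ^ (j : ℕ))) := by
  obtain ⟨u, rfl⟩ := IsUnit.of_pow_eq_one hg i.pos.ne'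
  let conj : A →ₗ[k] A := LinearMap.mulLeft k ↑u⁻¹ ∘ₗ LinearMap.mulRight k ↑u
  have conj_basis : ∀ p, conj (b p) = ω ^ (p.1 : ℕ) • b p := fun ⟨i', j⟩ ↦ by
    simpa [conj, hb] using Units.inv_mul_pow_mul_pow_mul u hxg i' j
  have hrange : (Set.range fun j : Fin N => x ^ (i : ℕ) * ↑u ^ (j : ℕ)) =
      b '' {p | ω ^ (p.1 : ℕ) = ω ^ (i : ℕ)} := by
    rw [hω.setOf_pow_fst_eq_pow, ← Set.range_comp]
    exact congrArg Set.range (funext fun j ↦ (hb i j).symm)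
  ext a
  rw [Set.mem_ofPred_eq, SetLike.mem_coe, hrange,
    ← b.apply_eq_smul_iff_mem_span conj_basis, ← Units.inv_mul_mul_eq_smul_iff]
  rfl

end Taft

theorem taft_invariants_general
    (k : Type*) [Field k] (N : ℕ) (hN : 2 ≤ N)
    (ω : k) (hω : IsPrimitiveRoot ω N)
    (A : Type*) [Ring A] [Algebra k A]
    (g x : A) (hg : g ^ N = 1) (hxg : x * g = ω • (g * x))
    (b : Module.Basis (Fin N × Fin N) k A)
    (hb : ∀ i j : Fin N, b (i, j) = x ^ (i : ℕ) * g ^ (j : ℕ)) :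
    {a : A | g * a = a * g} =
      ↑(Submodule.span k (Set.range fun j : Fin N => g ^ (j : ℕ))) ∧
    {a : A | ω • (g * a) = a * g} =
      ↑(Submodule.span k (Set.range fun j : Fin N => x * g ^ (j : ℕ))) := by
  have invariants := taft_twisted_invariants hω hg hxg b hb
  constructor
  · simpa using invariants ⟨0, by omega⟩
  · simpa using invariants ⟨1, hN⟩

/-- In the Taft algebra `A_N`, the `G`-invariants under the conjugation-type
action (untwisted in even degrees, twisted by `ω` in odd degrees) are:
`A^G = kG = Span{g^j}` in even degrees, and `A^G = Span{x g^j}` in odd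
degrees.  (Invariance under the even action of the generator `g` reads
`g a g⁻¹ = a`, i.e. `g a = a g`; under the odd action `ω g a g⁻¹ = a`,
i.e. `ω (g a) = a g`.) -/
theorem taft_invariants
    (k : Type*) [Field k] (N : ℕ) (hN : 2 ≤ N)
    (ω : k) (hω : IsPrimitiveRoot ω N)
    (A : Type*) [Ring A] [Algebra k A]
    (g x : A) (hg : g ^ N = 1) (hx : x ^ N = 0) (hxg : x * g = ω • (g * x))
    (b : Module.Basis (Fin N × Fin N) k A)
    (hb : ∀ i j : Fin N, b (i, j) = x ^ (i : ℕ) * g ^ (j : ℕ)) :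
    {a : A | g * a = a * g} =
      ↑(Submodule.span k (Set.range fun j : Fin N => g ^ (j : ℕ))) ∧
    {a : A | ω • (g * a) = a * g} =
      ↑(Submodule.span k (Set.range fun j : Fin N => x * g ^ (j : ℕ))) :=
  taft_invariants_general k N hN ω hω A g x hg hxg b hb
end

section
/- Let A be a finite dimensional Hopf algebra with bijective antipode, right integral t, and right modular function α (so at = α(a)t). Then the Nakayama automorphism given by ν(a) = S̄²(a ↼ α), where a ↼ α = Σ α(a₁)a₂ and S̄ = S^{-1}, satisfies ν²(a) = S̄⁴(a) ↼ α² for all a ∈ A; in particular if S⁴ = id and α² = ε then ν² = id. -/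
/-!
In the convolution algebra `Hom(A, A ⊗ A)` one has `Δ = ι₁ * ι₂` with `ι₁ a = a ⊗ 1`,
`ι₂ a = 1 ⊗ a`, and `(S ⊗ S) ∘ τ ∘ Δ = (ι₂ ∘ S) * (ι₁ ∘ S)`; since `(χ ∘ S) * χ = 1` for every
algebra map `χ`, this is a left inverse of `Δ`, whose right inverse is `Δ ∘ S`. Hence `S` is an
anti-coalgebra map and `S²` a coalgebra map. For a character `α`, both `α` and `α ∘ S²` are
convolution inverses of the character `α ∘ S`, so `α ∘ S² = α`. Therefore `S̄²` commutes with
`(· ↼ α)`, and together with `(a ↼ φ) ↼ ψ = a ↼ (φ * ψ)` this gives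
`ν² = S̄⁴ ∘ (· ↼ α)² = (· ↼ α²) ∘ S̄⁴`.
-/

open TensorProduct Coalgebra HopfAlgebra WithConv LinearMap

namespace AlgHom

variable {R A B : Type*} [CommSemiring R] [Semiring A] [HopfAlgebra R A] [Semiring B] [Algebra R B]

lemma toConv_comp_antipode_mul (h : A →ₐ[R] B) :
    toConv (h.toLinearMap ∘ₗ antipode R) * toConv h.toLinearMap = 1 := by
  have := algHom_comp_convMul_distrib h (toConv (antipode R)) (toConv .id)
  rw [antipode_mul_id] at this
  ext a
  simpa using congr($this a).symm

lemma toConv_mul_comp_antipode (h : A →ₐ[R] B) :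
    toConv h.toLinearMap * toConv (h.toLinearMap ∘ₗ antipode R) = 1 := by
  have := algHom_comp_convMul_distrib h (toConv .id) (toConv (antipode R))
  rw [id_mul_antipode] at this
  ext a
  simpa using congr($this a).symm

variable {C : Type*} [CommSemiring C] [Algebra R C]

def compAntipode (χ : A →ₐ[R] C) : A →ₐ[R] C :=
  .ofLinearMap (χ.toLinearMap ∘ₗ antipode R) (by simp)
    (fun x y => by simp [antipode_mul_antidistrib, mul_comm])

lemma comp_antipode_comp_antipode (χ : A →ₐ[R] C) :
    χ.toLinearMap ∘ₗ antipode R ∘ₗ antipode R = χ.toLinearMap :=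
  toConv_injective (left_inv_eq_right_inv χ.toConv_mul_comp_antipode
    χ.compAntipode.toConv_mul_comp_antipode).symm

end AlgHom

open Algebra.TensorProduct (includeLeft includeRight)

lemma Bialgebra.toConv_comul_eq_includeLeft_mul_includeRight {R A : Type*} [CommSemiring R]
    [Semiring A] [Bialgebra R A] :
    toConv (comul : A →ₗ[R] A ⊗[R] A) =
      toConv (includeLeft : A →ₐ[R] A ⊗[R] A).toLinearMap *
        toConv (includeRight : A →ₐ[R] A ⊗[R] A).toLinearMap := by
  ext a
  simp [(ℛ R a).convMul_apply, ← (ℛ R a).eq]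

namespace HopfAlgebra

variable {R A : Type*} [CommSemiring R] [Semiring A] [HopfAlgebra R A]

lemma toConv_map_antipode_comp_comm_comul :
    toConv (map (antipode R) (antipode R) ∘ₗ (TensorProduct.comm R A A).toLinearMap ∘ₗ comul) =
      toConv ((includeRight : A →ₐ[R] A ⊗[R] A).toLinearMap ∘ₗ antipode R) *
        toConv ((includeLeft : A →ₐ[R] A ⊗[R] A).toLinearMap ∘ₗ antipode R) := by
  ext a
  simp [(ℛ R a).convMul_apply, ← (ℛ R a).eq]

lemma comul_comp_antipode :
    comul ∘ₗ antipode R =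
      map (antipode R) (antipode R) ∘ₗ (TensorProduct.comm R A A).toLinearMap ∘ₗ comul := by
  apply toConv_injective
  refine (left_inv_eq_right_inv ?_ comul_right_inv).symm
  rw [toConv_map_antipode_comp_comm_comul, Bialgebra.toConv_comul_eq_includeLeft_mul_includeRight,
    ← mul_assoc, mul_assoc (toConv (_ ∘ₗ antipode R)), AlgHom.toConv_comp_antipode_mul, mul_one,
    AlgHom.toConv_comp_antipode_mul]

lemma comul_comp_antipode_comp_antipode :
    comul ∘ₗ antipode R ∘ₗ antipode R =
      map (antipode R ∘ₗ antipode R) (antipode R ∘ₗ antipode R) ∘ₗ (comul : A →ₗ[R] A ⊗[R] A) := by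
  have hcomm : map (antipode R) (antipode R) ∘ₗ (TensorProduct.comm R A A).toLinearMap ∘ₗ
      map (antipode R) (antipode R) ∘ₗ (TensorProduct.comm R A A).toLinearMap =
      map (antipode R ∘ₗ antipode R) (antipode R ∘ₗ antipode R) := by
    ext; simp
  rw [← comp_assoc, comul_comp_antipode, comp_assoc, comp_assoc, comul_comp_antipode, ← hcomm]
  simp only [comp_assoc]

end HopfAlgebra

namespace Coalgebra

variable {R M : Type*} [CommSemiring R] [AddCommMonoid M] [Module R M] [Coalgebra R M]

/-- `rightHit φ m = m ↼ φ = ∑ φ(m₁) m₂`. -/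
noncomputable def rightHit (φ : M →ₗ[R] R) : M →ₗ[R] M :=
  (TensorProduct.lid R M).toLinearMap ∘ₗ map φ .id ∘ₗ comul

lemma Repr.rightHit_apply {ι : Type*} {m : M} (𝓡 : Repr R m ι) (φ : M →ₗ[R] R) :
    rightHit φ m = ∑ i ∈ 𝓡.index, φ (𝓡.left i) • 𝓡.right i := by
  simp [rightHit, ← 𝓡.eq]

lemma rightHit_counit : rightHit (counit : M →ₗ[R] R) = .id := by
  ext m
  simp [rightHit, ← (ℛ R m).eq]

lemma rightHit_comp_rightHit (φ ψ : M →ₗ[R] R) :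
    rightHit ψ ∘ₗ rightHit φ = rightHit (toConv φ * toConv ψ).ofConv := by
  ext m
  let 𝓡 := ℛ R m
  have coassoc := congr(((TensorProduct.lid R M).toLinearMap ∘ₗ
    map φ ((TensorProduct.lid R M).toLinearMap ∘ₗ map ψ .id))
    $(sum_tmul_tmul_eq 𝓡 (fun i => ℛ R (𝓡.left i)) (fun i => ℛ R (𝓡.right i))))
  simp only [map_sum, comp_apply, map_tmul] at coassoc
  calc rightHit ψ (rightHit φ m)
      = ∑ i ∈ 𝓡.index, ∑ j ∈ (ℛ R (𝓡.right i)).index,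
          φ (𝓡.left i) • ψ ((ℛ R (𝓡.right i)).left j) • (ℛ R (𝓡.right i)).right j := by
        rw [𝓡.rightHit_apply, map_sum]
        refine Finset.sum_congr rfl fun i _ => ?_
        rw [map_smul, (ℛ R (𝓡.right i)).rightHit_apply, Finset.smul_sum]
    _ = ∑ i ∈ 𝓡.index, ∑ j ∈ (ℛ R (𝓡.left i)).index,
          φ ((ℛ R (𝓡.left i)).left j) • ψ ((ℛ R (𝓡.left i)).right j) • 𝓡.right i :=
        coassoc.symm
    _ = ∑ i ∈ 𝓡.index, (∑ j ∈ (ℛ R (𝓡.left i)).index,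
          φ ((ℛ R (𝓡.left i)).left j) * ψ ((ℛ R (𝓡.left i)).right j)) • 𝓡.right i := by
        simp only [Finset.sum_smul, smul_smul]
    _ = rightHit (toConv φ * toConv ψ).ofConv m := by
        rw [𝓡.rightHit_apply]
        exact Finset.sum_congr rfl fun i _ =>
          congrArg (· • 𝓡.right i) ((ℛ R (𝓡.left i)).convMul_apply (toConv φ) (toConv ψ)).symm

lemma rightHit_comp_eq_comp_rightHit {φ : M →ₗ[R] R} {f : M →ₗ[R] M}
    (hf : comul ∘ₗ f = map f f ∘ₗ comul) (hφ : φ ∘ₗ f = φ) :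
    rightHit φ ∘ₗ f = f ∘ₗ rightHit φ := by
  rw [rightHit, comp_assoc, comp_assoc, hf, ← comp_assoc _ (map f f), ← map_comp, hφ,
    id_comp, ← comp_assoc]
  rw [show (TensorProduct.lid R M).toLinearMap ∘ₗ map φ f =
      f ∘ₗ (TensorProduct.lid R M).toLinearMap ∘ₗ map φ .id by ext; simp]
  rfl

end Coalgebra

lemma HopfAlgebra.commute_inverse_antipode_sq_rightHit {R A : Type*} [CommSemiring R]
    [Semiring A] [HopfAlgebra R A] {S' : A →ₗ[R] A}
    (hl : ∀ a, S' (antipode R a) = a) (hr : ∀ a, antipode R (S' a) = a)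
    {φ : A →ₗ[R] R} (hφ : φ ∘ₗ antipode R ∘ₗ antipode R = φ) :
    Commute (S' * S') (rightHit φ) := by
  have h := rightHit_comp_eq_comp_rightHit comul_comp_antipode_comp_antipode hφ
  ext a
  calc S' (S' (rightHit φ a))
      = S' (S' (rightHit φ (antipode R (antipode R (S' (S' a)))))) := by rw [hr, hr]
    _ = S' (S' (antipode R (antipode R (rightHit φ (S' (S' a)))))) :=
        congrArg (fun x => S' (S' x)) (LinearMap.congr_fun h (S' (S' a)))
    _ = rightHit φ (S' (S' a)) := by rw [hl, hl]

theorem nakayama_square_formula_general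
    (k : Type*) [Field k] (A : Type*) [Ring A] [HopfAlgebra k A]
    (S' : A →ₗ[k] A)
    (hS'l : ∀ a : A, S' ((HopfAlgebra.antipode k : A →ₗ[k] A) a) = a)
    (hS'r : ∀ a : A, (HopfAlgebra.antipode k : A →ₗ[k] A) (S' a) = a)
    (α : A →ₐ[k] k) :
    let rAct : (A →ₗ[k] k) → A →ₗ[k] A := fun φ =>
      (TensorProduct.lid k A).toLinearMap ∘ₗ
        (TensorProduct.map φ LinearMap.id) ∘ₗ Coalgebra.comul
    let α2 : A →ₗ[k] k :=
      (LinearMap.mul' k k) ∘ₗ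
        (TensorProduct.map α.toLinearMap α.toLinearMap) ∘ₗ Coalgebra.comul
    let ν : A → A := fun a => S' (S' (rAct α.toLinearMap a))
    (∀ a : A, ν (ν a) = rAct α2 (S' (S' (S' (S' a))))) ∧
    ((∀ a : A, (HopfAlgebra.antipode k : A →ₗ[k] A)
        ((HopfAlgebra.antipode k : A →ₗ[k] A)
          ((HopfAlgebra.antipode k : A →ₗ[k] A)
            ((HopfAlgebra.antipode k : A →ₗ[k] A) a))) = a) →
      (∀ a : A, α2 a = Coalgebra.counit (R := k) a) →
      ∀ a : A, ν (ν a) = a) := by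
  intro rAct α2 ν
  set T := S' * S'
  set H := rightHit α.toLinearMap
  have hTH : Commute T H :=
    commute_inverse_antipode_sq_rightHit hS'l hS'r α.comp_antipode_comp_antipode
  have hα2 : rAct α2 = H * H := (rightHit_comp_rightHit _ _).symm
  have hνν : T * H * (T * H) = H * H * (T * T) := by
    rw [hTH.symm.mul_mul_mul_comm, ((hTH.mul_left hTH).mul_right (hTH.mul_left hTH)).eq]
  have hν : ∀ a, ν (ν a) = rAct α2 (S' (S' (S' (S' a)))) := fun a => by
    rw [hα2]
    exact congr($hνν a)
  refine ⟨hν, fun hS4 hε a => ?_⟩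
  have hS'4 : S' (S' (S' (S' a))) = a := by
    simpa only [hS'r] using (hS4 (S' (S' (S' (S' a))))).symm
  rw [hν, hS'4, show α2 = counit from LinearMap.ext hε]
  exact congr($rightHit_counit a)

/-- Let `A` be a finite dimensional Hopf algebra with bijective antipode `S`
(with inverse `S̄`), right integral `t ≠ 0` and right modular function `α`
(an algebra homomorphism with `a·t = α(a)·t`).  The Nakayama automorphism
`ν(a) = S̄²(a ↼ α)`, where `a ↼ α = Σ α(a₁) a₂`, satisfies
`ν²(a) = S̄⁴(a) ↼ α²` (with `α²` the convolution square of `α`); in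
particular if `S⁴ = id` and `α² = ε` then `ν² = id`. -/
theorem nakayama_square_formula
    (k : Type*) [Field k] (A : Type*) [Ring A] [HopfAlgebra k A]
    [FiniteDimensional k A]
    (S' : A →ₗ[k] A)
    (hS'l : ∀ a : A, S' ((HopfAlgebra.antipode k : A →ₗ[k] A) a) = a)
    (hS'r : ∀ a : A, (HopfAlgebra.antipode k : A →ₗ[k] A) (S' a) = a)
    (α : A →ₐ[k] k) (t : A) (ht : t ≠ 0)
    (hint : ∀ a : A, a * t = α a • t) :
    let rAct : (A →ₗ[k] k) → A →ₗ[k] A := fun φ =>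
      (TensorProduct.lid k A).toLinearMap ∘ₗ
        (TensorProduct.map φ LinearMap.id) ∘ₗ Coalgebra.comul
    let α2 : A →ₗ[k] k :=
      (LinearMap.mul' k k) ∘ₗ
        (TensorProduct.map α.toLinearMap α.toLinearMap) ∘ₗ Coalgebra.comul
    let ν : A → A := fun a => S' (S' (rAct α.toLinearMap a))
    (∀ a : A, ν (ν a) = rAct α2 (S' (S' (S' (S' a))))) ∧
    ((∀ a : A, (HopfAlgebra.antipode k : A →ₗ[k] A)
        ((HopfAlgebra.antipode k : A →ₗ[k] A)
          ((HopfAlgebra.antipode k : A →ₗ[k] A)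
            ((HopfAlgebra.antipode k : A →ₗ[k] A) a))) = a) →
      (∀ a : A, α2 a = Coalgebra.counit (R := k) a) →
      ∀ a : A, ν (ν a) = a) :=
  nakayama_square_formula_general k A S' hS'l hS'r α
end
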